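/- Let k be a positive integer with k ≡ 2 (mod 6) or k ≡ 3 (mod 6). Then there is no positive integer d such that {1, 2k², 2k²+2k+1, d} is a D(-k²)-quadruple. -/

import Mathlib

/-!
Put `m = 2k + 1`. The conditions on `2k²·d` and `(2k² + 2k + 1)·d` say that `2d - 1 = s²` and
that `(2z, s)` solves the Pell-type equation `w² - (m² + 1)s² = 2m`. The descent
`(w, s) ↦ ((m² + 1)s - mw, w - ms)` flips the sign of the right-hand side, shrinks `|s|`, and
swaps `w` and `s` modulo `m`; it ends at `|s| = 1`, so every solution has `s² ≡ 1 (mod m)`, i.e.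
`m ∣ 2d - 2`. With `d - k² = x²` this gives `(2x)² ≡ 3 (mod m)`, impossible because
`m ≡ 5, 7 (mod 12)` forces the Jacobi symbol `(3 | m)` to be `-1`.
-/

theorem sq_ne_two_mul_of_odd {m : ℤ} (hm : Odd m) (w : ℤ) : w ^ 2 ≠ 2 * m := by
  intro h
  obtain ⟨c, rfl⟩ : Even w := by
    rw [← Int.even_pow' two_ne_zero, h]
    exact even_two_mul m
  exact Int.not_even_iff_odd.mpr hm ⟨c ^ 2, by linarith⟩

theorem abs_sub_mul_lt_of_abs_pell {m a b : ℤ} (hm : 0 < m) (ha : 0 ≤ a) (hb : 2 ≤ b)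
    (h : |a ^ 2 - (m ^ 2 + 1) * b ^ 2| = 2 * m) : |a - m * b| < b := by
  obtain ⟨hlo, hhi⟩ := abs_le.mp h.le
  have hmb : 2 * m < 2 * m * b ^ 2 := lt_mul_right (by positivity) (by nlinarith)
  rw [abs_sub_lt_iff]
  constructor
  · have : a < (m + 1) * b := lt_of_pow_lt_pow_left₀ 2 (by positivity) (by nlinarith)
    linarith
  · have : (m - 1) * b < a := lt_of_pow_lt_pow_left₀ 2 ha (by nlinarith)
    linarith

theorem sq_modEq_one_of_abs_pell {m : ℤ} (hm : 0 < m) (hodd : Odd m) {w s : ℤ}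
    (h : |w ^ 2 - (m ^ 2 + 1) * s ^ 2| = 2 * m) :
    s ^ 2 ≡ 1 [ZMOD m] ∧ w ^ 2 ≡ 1 [ZMOD m] := by
  obtain ⟨n, hn⟩ : ∃ n : ℕ, s.natAbs = n := ⟨_, rfl⟩
  induction n using Nat.strong_induction_on generalizing w s with
  | _ n ih =>
  rcases (by omega : n = 0 ∨ n = 1 ∨ 2 ≤ n) with rfl | rfl | hn2
  · obtain rfl : s = 0 := by omega
    rw [zero_pow two_ne_zero, mul_zero, sub_zero, abs_of_nonneg (sq_nonneg w)] at h
    exact absurd h (sq_ne_two_mul_of_odd hodd w)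
  · have hs : s ^ 2 = 1 := by rw [← Int.natAbs_sq, hn]; norm_num
    rw [hs, mul_one] at h
    refine ⟨by rw [hs], Int.modEq_iff_dvd.mpr ?_⟩
    rcases (abs_eq (by positivity)).mp h with h | h
    · exact ⟨-(m + 2), by linear_combination -h⟩
    · exact ⟨-(m - 2), by linear_combination -h⟩
  · have hb : 2 ≤ |s| := by rw [Int.abs_eq_natAbs]; omega
    have hpell : |(|w|) ^ 2 - (m ^ 2 + 1) * |s| ^ 2| = 2 * m := by rwa [sq_abs, sq_abs]
    have hlt := abs_sub_mul_lt_of_abs_pell hm (abs_nonneg w) hb hpell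
    have hpell' : |((m ^ 2 + 1) * |s| - m * |w|) ^ 2 - (m ^ 2 + 1) * (|w| - m * |s|) ^ 2| =
        2 * m := by
      rw [← hpell, ← abs_neg]
      ring_nf
    obtain ⟨hs₁, hw₁⟩ := ih _ (by rw [← hn]; zify; exact hlt) hpell' rfl
    have hs_w₁ : |s| ≡ (m ^ 2 + 1) * |s| - m * |w| [ZMOD m] :=
      Int.modEq_iff_dvd.mpr ⟨m * |s| - |w|, by ring⟩
    have hw_s₁ : |w| ≡ |w| - m * |s| [ZMOD m] := Int.modEq_iff_dvd.mpr ⟨-|s|, by ring⟩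
    rw [← sq_abs s, ← sq_abs w]
    exact ⟨(hs_w₁.pow 2).trans hw₁, (hw_s₁.pow 2).trans hs₁⟩

theorem jacobiSym_three_eq_neg_one {M : ℕ} (hM : M % 12 = 5 ∨ M % 12 = 7) :
    jacobiSym 3 M = -1 := by
  rw [jacobiSym.mod_right 3 (Nat.odd_iff.mpr (by omega)), show 4 * (3 : ℤ).natAbs = 12 from rfl]
  rcases hM with hM | hM <;> rw [hM]
  · have hns : ¬IsSquare ((3 : ℤ) : ZMod 5) := by decide
    have : Fact (Nat.Prime 5) := ⟨by norm_num⟩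
    exact ZMod.nonsquare_iff_jacobiSym_eq_neg_one.mpr hns
  · have hns : ¬IsSquare ((3 : ℤ) : ZMod 7) := by decide
    have : Fact (Nat.Prime 7) := ⟨by norm_num⟩
    exact ZMod.nonsquare_iff_jacobiSym_eq_neg_one.mpr hns

theorem not_sq_modEq_three {m : ℤ} (hm : m % 12 = 5 ∨ m % 12 = 7) (x : ℤ) :
    ¬ x ^ 2 ≡ 3 [ZMOD m] := by
  intro h
  have hM : x ^ 2 ≡ 3 [ZMOD (m.natAbs : ℤ)] :=
    Int.modEq_iff_dvd.mpr (Int.natAbs_dvd.mpr h.dvd)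
  have hJ : jacobiSym 3 m.natAbs = -1 := jacobiSym_three_eq_neg_one (by omega)
  refine ZMod.nonsquare_of_jacobiSym_eq_neg_one hJ ⟨x, ?_⟩
  rw [← sq]
  exact_mod_cast ((ZMod.intCast_eq_intCast_iff _ _ _).mpr hM).symm

theorem exists_sq_eq_of_sq_mul_eq_sq {k a y : ℤ} (hk : k ≠ 0) (h : k ^ 2 * a = y ^ 2) :
    ∃ s, s ^ 2 = a := by
  obtain ⟨s, rfl⟩ := (Int.pow_dvd_pow_iff two_ne_zero).mp ⟨a, h.symm⟩
  exact ⟨s, mul_left_cancel₀ (pow_ne_zero 2 hk) (by rw [h]; ring)⟩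

/-- If `k ≡ 2 (mod 6)` or `k ≡ 3 (mod 6)`, then there is no positive integer `d` such that
`{1, 2k^2, 2k^2+2k+1, d}` is a `D(-k^2)`-quadruple. -/
theorem stmt_19 (k : ℤ) (hk : 0 < k) (hmod : k % 6 = 2 ∨ k % 6 = 3) :
    ¬ ∃ d : ℤ, 0 < d ∧
      d ≠ 1 ∧ d ≠ 2 * k ^ 2 ∧ d ≠ 2 * k ^ 2 + 2 * k + 1 ∧
      (∃ x : ℤ, 1 * (2 * k ^ 2) - k ^ 2 = x ^ 2) ∧
      (∃ x : ℤ, 1 * (2 * k ^ 2 + 2 * k + 1) - k ^ 2 = x ^ 2) ∧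
      (∃ x : ℤ, 2 * k ^ 2 * (2 * k ^ 2 + 2 * k + 1) - k ^ 2 = x ^ 2) ∧
      (∃ x : ℤ, 1 * d - k ^ 2 = x ^ 2) ∧
      (∃ x : ℤ, 2 * k ^ 2 * d - k ^ 2 = x ^ 2) ∧
      (∃ x : ℤ, (2 * k ^ 2 + 2 * k + 1) * d - k ^ 2 = x ^ 2) := by
  rintro ⟨d, -, -, -, -, -, -, -, ⟨x, hx⟩, ⟨y, hy⟩, ⟨z, hz⟩⟩
  obtain ⟨s, hs⟩ : ∃ s, s ^ 2 = 2 * d - 1 :=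
    exists_sq_eq_of_sq_mul_eq_sq (y := y) hk.ne' (by linear_combination hy)
  have hpell : |(2 * z) ^ 2 - ((2 * k + 1) ^ 2 + 1) * s ^ 2| = 2 * (2 * k + 1) := by
    rw [show (2 * z) ^ 2 - ((2 * k + 1) ^ 2 + 1) * s ^ 2 = 2 * (2 * k + 1) by
      linear_combination -4 * hz - ((2 * k + 1) ^ 2 + 1) * hs]
    exact abs_of_pos (by omega)
  obtain ⟨t, ht⟩ := (sq_modEq_one_of_abs_pell (by omega) ⟨k, by ring⟩ hpell).1.dvd
  refine not_sq_modEq_three (m := 2 * k + 1) (by omega) (2 * x) (Int.modEq_iff_dvd.mpr ?_)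
  exact ⟨2 * t + 2 * k - 1, by linear_combination 4 * hx + 2 * hs + 2 * ht⟩
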